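/- Let Γ be a countable discrete group with a measurable action on a measure space (X,ν), and let Y ⊆ X be a domain of asymptotic expansion. Then every measurable subset Y' ⊆ Y with ν(Y') > 0 is again a domain of asymptotic expansion. -/

import Mathlib

open MeasureTheory Set Filter Pointwise

/-- The union `S · A = ⋃ s ∈ S, s • A` of the translates of `A` by elements of the
finite set `S ⊆ Γ`. -/
def finSMul {Γ X : Type*} [Group Γ] [MulAction Γ X] (S : Finset Γ) (A : Set X) : Set X :=
  ⋃ s ∈ S, s • A

/-- `S` is a finite symmetric subset of `Γ` containing the identity. -/
def SymmFin {Γ : Type*} [Group Γ] (S : Finset Γ) : Prop :=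
  (1 : Γ) ∈ S ∧ ∀ s ∈ S, s⁻¹ ∈ S

/-- The `S`-boundary `∂_S A = (S·A) \ A`. -/
def finBdry {Γ X : Type*} [Group Γ] [MulAction Γ X] (S : Finset Γ) (A : Set X) : Set X :=
  finSMul S A \ A

/-- `Y` is a domain of `(c,S)`-expansion: `ν((S·A) ∩ Y) > (1+c)·ν(A)` for every
measurable `A ⊆ Y` with `0 < ν(A) ≤ ν(Y)/2`. -/
def ExpandsOn {Γ X : Type*} [Group Γ] [MulAction Γ X] [MeasurableSpace X]
    (ν : MeasureTheory.Measure X) (Y : Set X) (c : ℝ) (S : Finset Γ) : Prop :=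
  ∀ A : Set X, MeasurableSet A → A ⊆ Y → 0 < ν A → ν A ≤ ν Y / 2 →
    (1 + ENNReal.ofReal c) * ν A < ν (finSMul S A ∩ Y)

/-- `Y` is a domain of expansion: `(c,S)`-expansion for some `c > 0` and some finite
symmetric `S ∋ 1`. -/
def ExpDomain (Γ : Type*) {X : Type*} [Group Γ] [MulAction Γ X] [MeasurableSpace X]
    (ν : MeasureTheory.Measure X) (Y : Set X) : Prop :=
  ∃ c : ℝ, 0 < c ∧ ∃ S : Finset Γ, SymmFin S ∧ ExpandsOn ν Y c S

/-- The `(α,c,S)` asymptotic-expansion estimate on `Y`: `ν((S·A) ∩ Y) > (1+c)·ν(A)` for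
every measurable `A ⊆ Y` with `α·ν(Y) ≤ ν(A) ≤ ν(Y)/2`. -/
def AsymExpandsOn {Γ X : Type*} [Group Γ] [MulAction Γ X] [MeasurableSpace X]
    (ν : MeasureTheory.Measure X) (Y : Set X) (α c : ℝ) (S : Finset Γ) : Prop :=
  ∀ A : Set X, MeasurableSet A → A ⊆ Y → ENNReal.ofReal α * ν Y ≤ ν A → ν A ≤ ν Y / 2 →
    (1 + ENNReal.ofReal c) * ν A < ν (finSMul S A ∩ Y)

/-- `Y` is a domain of asymptotic expansion. -/
def AsymExpDomain (Γ : Type*) {X : Type*} [Group Γ] [MulAction Γ X] [MeasurableSpace X]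
    (ν : MeasureTheory.Measure X) (Y : Set X) : Prop :=
  ∀ α : ℝ, 0 < α → α ≤ 1 / 2 →
    ∃ c : ℝ, 0 < c ∧ ∃ S : Finset Γ, SymmFin S ∧ AsymExpandsOn ν Y α c S

/-- The action of `Γ` on the probability space `(X,ν)` is strongly ergodic: every almost
invariant sequence of measurable sets is asymptotically trivial. -/
def StronglyErgodic (Γ : Type*) {X : Type*} [Group Γ] [MulAction Γ X] [MeasurableSpace X]
    (ν : MeasureTheory.Measure X) : Prop :=
  ∀ C : ℕ → Set X, (∀ n, MeasurableSet (C n)) →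
    (∀ γ : Γ, Filter.Tendsto (fun n => ν (symmDiff (C n) (γ • C n))) Filter.atTop (nhds 0)) →
    Filter.Tendsto (fun n => ν (C n) * (1 - ν (C n))) Filter.atTop (nhds 0)

/-- The action of `Γ` on `(X,ν)` is measure-class-preserving. -/
def MeasClassPres (Γ : Type*) {X : Type*} [Group Γ] [MulAction Γ X] [MeasurableSpace X]
    (ν : MeasureTheory.Measure X) : Prop :=
  ∀ (γ : Γ) (A : Set X), MeasurableSet A → (ν (γ • A) = 0 ↔ ν A = 0)

/-- The action of `Γ` on `(X,ν)` is ergodic: every invariant measurable set is null or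
conull. -/
def ErgodicAct (Γ : Type*) {X : Type*} [Group Γ] [MulAction Γ X] [MeasurableSpace X]
    (ν : MeasureTheory.Measure X) : Prop :=
  ∀ A : Set X, MeasurableSet A → (∀ γ : Γ, γ • A = A) → ν A = 0 ∨ ν Aᶜ = 0

/-- `W` admits an exhaustion by measurable subsets satisfying `P`. -/
def ExhaustionBy {X : Type*} [MeasurableSpace X] (ν : MeasureTheory.Measure X)
    (W : Set X) (P : Set X → Prop) : Prop :=
  ∃ Y : ℕ → Set X, Monotone Y ∧ (∀ n, MeasurableSet (Y n)) ∧ (∀ n, Y n ⊆ W) ∧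
    (∀ n, P (Y n)) ∧ ν (W \ ⋃ n, Y n) = 0

/-!
Given `α`, use the asymptotic expansion of `Y` at a proportion `α₀` with
`α₀ ν(Y) ≤ min α (1/8) · ν(Y')`, with constants `c, S`, and choose `N` with `(1 + c)^N α₀ > 1`.
Every `E ⊆ Y` of measure at least `α₀ ν(Y)` then fills more than half of `Y` within `N` steps:
`ν(S^N E ∩ Y) > ν(Y)/2`. Applied to `A` and to `E = Y \ S^{2N} A`, whose `S^N`-neighbourhood
misses `S^N A` because `S` is symmetric, this forces `ν(Y \ S^{2N} A) < α₀ ν(Y) ≤ ν(Y')/8`.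
So `S^{2N} A` covers `7/8` of `Y'` while `ν(A) ≤ ν(Y')/2`: `Y'` expands with `c = 1/4` and `S^{2N}`.
-/

open scoped ENNReal Topology

section finSMul

variable {Γ X : Type*} [Group Γ] [MulAction Γ X]

lemma finSMul_eq_smul (S : Finset Γ) (A : Set X) : finSMul S A = (S : Set Γ) • A :=
  Set.iUnion_smul_set _ _

lemma mem_finSMul {S : Finset Γ} {A : Set X} {x : X} :
    x ∈ finSMul S A ↔ ∃ s ∈ S, ∃ y ∈ A, s • y = x := by
  simp [finSMul_eq_smul, Set.mem_smul]

lemma subset_finSMul {S : Finset Γ} (h1 : (1 : Γ) ∈ S) (A : Set X) : A ⊆ finSMul S A :=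
  fun x hx => mem_finSMul.2 ⟨1, h1, x, hx, one_smul _ _⟩

lemma finSMul_mono {S T : Finset Γ} {A B : Set X} (hST : S ⊆ T) (hAB : A ⊆ B) :
    finSMul S A ⊆ finSMul T B := by
  rw [finSMul_eq_smul, finSMul_eq_smul]
  exact Set.smul_subset_smul (Finset.coe_subset.2 hST) hAB

lemma finSMul_finSMul [DecidableEq Γ] (S T : Finset Γ) (A : Set X) :
    finSMul S (finSMul T A) = finSMul (S * T) A := by
  simp only [finSMul_eq_smul, Finset.coe_mul, smul_smul]

lemma disjoint_finSMul_diff_finSMul [DecidableEq Γ] {T : Finset Γ} (hT : ∀ t ∈ T, t⁻¹ ∈ T)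
    (U : Finset Γ) (A B : Set X) :
    Disjoint (finSMul T (B \ finSMul (T * U) A)) (finSMul U A) := by
  refine Set.disjoint_left.2 fun x hx hxU => ?_
  obtain ⟨t, ht, y, ⟨-, hy⟩, rfl⟩ := mem_finSMul.1 hx
  rw [← finSMul_finSMul] at hy
  exact hy (mem_finSMul.2 ⟨t⁻¹, hT t ht, t • y, hxU, inv_smul_smul t y⟩)

lemma measurableSet_finSMul [MeasurableSpace X] [MeasurableConstSMul Γ X] (S : Finset Γ)
    {A : Set X} (hA : MeasurableSet A) : MeasurableSet (finSMul S A) :=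
  MeasurableSet.biUnion S.countable_toSet fun s _ => hA.const_smul s

end finSMul

lemma SymmFin.pow {Γ : Type*} [Group Γ] [DecidableEq Γ] {S : Finset Γ} (hS : SymmFin S)
    (n : ℕ) : SymmFin (S ^ n) := by
  have hinv : S⁻¹ ⊆ S := fun s hs => inv_inv s ▸ hS.2 _ (Finset.mem_inv'.1 hs)
  refine ⟨Finset.one_mem_pow hS.1, fun s hs => ?_⟩
  have : s⁻¹ ∈ (S ^ n)⁻¹ := Finset.inv_mem_inv hs
  rw [← inv_pow] at this
  exact Finset.pow_subset_pow_left hinv this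

lemma ENNReal.exists_lt_pow_mul {r a b : ℝ≥0∞} (hr : 1 < r) (ha : a ≠ 0) (hb : b ≠ ∞) :
    ∃ N : ℕ, b < r ^ N * a := by
  have h : Tendsto (fun n : ℕ => r ^ n * a) atTop (𝓝 ∞) := by
    simpa [ENNReal.top_mul ha] using
      ENNReal.Tendsto.mul_const (b := a) (ENNReal.tendsto_pow_atTop_nhds_top_iff.2 hr) (Or.inl ENNReal.top_ne_zero)
  exact (h.eventually (lt_mem_nhds hb.lt_top)).exists

lemma measure_le_half_of_half_lt_of_disjoint {X : Type*} [MeasurableSpace X] {ν : Measure X}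
    {Y P Q : Set X} (hPY : P ⊆ Y) (hQY : Q ⊆ Y) (hPQ : Disjoint P Q) (hQ : MeasurableSet Q)
    (hP : ν Y / 2 < ν P) : ν Q ≤ ν Y / 2 := by
  by_contra! hQ'
  have := calc ν Y = ν Y / 2 + ν Y / 2 := (ENNReal.add_halves _).symm
    _ < ν P + ν Q := ENNReal.add_lt_add hP hQ'
    _ = ν (P ∪ Q) := (measure_union hPQ hQ).symm
    _ ≤ ν Y := measure_mono (Set.union_subset hPY hQY)
  exact this.false

lemma ENNReal.exists_pos_le_half_ofReal_mul_le {b d : ℝ≥0∞} (hb : b ≠ ∞) (hd : d ≠ 0) :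
    ∃ α : ℝ, 0 < α ∧ α ≤ 1 / 2 ∧ ENNReal.ofReal α * b ≤ d := by
  obtain ⟨n, hn, hlt⟩ := ENNReal.exists_nnreal_pos_mul_lt hb hd
  refine ⟨min n (1 / 2), lt_min hn (by norm_num), min_le_right _ _, le_trans ?_ hlt.le⟩
  gcongr
  exact (ENNReal.ofReal_le_ofReal (min_le_left _ _)).trans_eq (ENNReal.ofReal_coe_nnreal)

lemma one_add_quarter_mul_lt_measure_inter {X : Type*} [MeasurableSpace X] {ν : Measure X}
    {Y A B : Set X} (hY : ν Y ≠ ∞) (hY0 : ν Y ≠ 0) (hA : ν A ≤ ν Y / 2)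
    (hB : ν (Y \ B) ≤ ENNReal.ofReal (1 / 8) * ν Y) :
    (1 + ENNReal.ofReal (1 / 4)) * ν A < ν (B ∩ Y) := by
  have hsplit : ν Y ≤ ν (B ∩ Y) + ν (Y \ B) := by
    simpa only [inter_comm] using measure_le_inter_add_sdiff ν Y B
  have hAfin : ν A ≠ ∞ := ne_top_of_le_ne_top (ENNReal.div_ne_top hY two_ne_zero) hA
  have hBfin : ν (B ∩ Y) ≠ ∞ := measure_ne_top_of_subset inter_subset_right hY
  have hDfin : ν (Y \ B) ≠ ∞ := measure_ne_top_of_subset sdiff_subset hY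
  have hYpos : 0 < (ν Y).toReal := ENNReal.toReal_pos hY0 hY
  have hA' := ENNReal.toReal_mono (ENNReal.div_ne_top hY two_ne_zero) hA
  have hB' := ENNReal.toReal_mono (ENNReal.mul_ne_top ENNReal.ofReal_ne_top hY) hB
  have hsplit' := ENNReal.toReal_mono (ENNReal.add_ne_top.2 ⟨hBfin, hDfin⟩) hsplit
  rw [ENNReal.toReal_div, ENNReal.toReal_ofNat] at hA'
  rw [ENNReal.toReal_mul, ENNReal.toReal_ofReal (by norm_num)] at hB'
  rw [ENNReal.toReal_add hBfin hDfin] at hsplit'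
  rw [← ENNReal.toReal_lt_toReal (by finiteness) hBfin, ENNReal.toReal_mul,
    ENNReal.toReal_add ENNReal.one_ne_top ENNReal.ofReal_ne_top, ENNReal.toReal_one,
    ENNReal.toReal_ofReal (by norm_num)]
  linarith

section Expansion

variable {Γ X : Type*} [Group Γ] [DecidableEq Γ] [MulAction Γ X] [MeasurableSpace X]
  [MeasurableConstSMul Γ X] {ν : Measure X} {Y : Set X} {α c : ℝ} {S : Finset Γ} {N : ℕ}

lemma AsymExpandsOn.half_lt_measure_finSMul_pow_inter (h : AsymExpandsOn ν Y α c S)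
    (h1 : (1 : Γ) ∈ S) (hYm : MeasurableSet Y)
    (hN : ν Y < (1 + ENNReal.ofReal c) ^ N * (ENNReal.ofReal α * ν Y))
    {E : Set X} (hEm : MeasurableSet E) (hEY : E ⊆ Y) (hE : ENNReal.ofReal α * ν Y ≤ ν E) :
    ν Y / 2 < ν (finSMul (S ^ N) E ∩ Y) := by
  by_contra! hhalf
  set D : ℕ → Set X := fun k => finSMul (S ^ k) E ∩ Y
  have hED (k : ℕ) : E ⊆ D k := subset_inter (subset_finSMul (Finset.one_mem_pow h1) E) hEY
  have hDN {k : ℕ} (hk : k ≤ N) : D k ⊆ D N :=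
    inter_subset_inter_left _ (finSMul_mono (Finset.pow_subset_pow_right h1 hk) subset_rfl)
  have hDsucc (k : ℕ) : finSMul S (D k) ∩ Y ⊆ D (k + 1) := by
    refine inter_subset_inter_left _ ?_
    rw [pow_succ', ← finSMul_finSMul]
    exact finSMul_mono subset_rfl inter_subset_left
  have hgrow : ∀ k ≤ N, (1 + ENNReal.ofReal c) ^ k * ν E ≤ ν (D k) := by
    intro k
    induction k with
    | zero => intro _; simpa using measure_mono (hED 0)
    | succ k ih =>
      intro hk
      have hDm : MeasurableSet (D k) := (measurableSet_finSMul _ hEm).inter hYm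
      calc (1 + ENNReal.ofReal c) ^ (k + 1) * ν E
          = (1 + ENNReal.ofReal c) * ((1 + ENNReal.ofReal c) ^ k * ν E) := by
            rw [pow_succ', mul_assoc]
        _ ≤ (1 + ENNReal.ofReal c) * ν (D k) := by gcongr; exact ih (by omega)
        _ ≤ ν (finSMul S (D k) ∩ Y) :=
            (h _ hDm inter_subset_right (hE.trans (measure_mono (hED k)))
              ((measure_mono (hDN (by omega))).trans hhalf)).le
        _ ≤ ν (D (k + 1)) := measure_mono (hDsucc k)
  have := calc ν Y < (1 + ENNReal.ofReal c) ^ N * (ENNReal.ofReal α * ν Y) := hN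
    _ ≤ (1 + ENNReal.ofReal c) ^ N * ν E := by gcongr
    _ ≤ ν (D N) := hgrow N le_rfl
    _ ≤ ν Y := measure_mono inter_subset_right
  exact this.false

lemma AsymExpandsOn.measure_diff_finSMul_pow_lt (h : AsymExpandsOn ν Y α c S)
    (hS : SymmFin S) (hYm : MeasurableSet Y)
    (hN : ν Y < (1 + ENNReal.ofReal c) ^ N * (ENNReal.ofReal α * ν Y))
    {A : Set X} (hAm : MeasurableSet A) (hAY : A ⊆ Y) (hA : ENNReal.ofReal α * ν Y ≤ ν A) :
    ν (Y \ finSMul (S ^ (N + N)) A) < ENNReal.ofReal α * ν Y := by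
  by_contra! hE
  set E := Y \ finSMul (S ^ (N + N)) A
  have hEm : MeasurableSet E := hYm.diff (measurableSet_finSMul _ hAm)
  have hdisj : Disjoint (finSMul (S ^ N) A ∩ Y) (finSMul (S ^ N) E ∩ Y) := by
    refine Disjoint.mono inter_subset_left inter_subset_left (Disjoint.symm ?_)
    simpa only [← pow_add] using disjoint_finSMul_diff_finSMul (hS.pow N).2 (S ^ N) A Y
  refine (measure_le_half_of_half_lt_of_disjoint inter_subset_right inter_subset_right hdisj
    ((measurableSet_finSMul _ hEm).inter hYm)
    (h.half_lt_measure_finSMul_pow_inter hS.1 hYm hN hAm hAY hA)).not_gt ?_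
  exact h.half_lt_measure_finSMul_pow_inter hS.1 hYm hN hEm sdiff_subset hE

end Expansion

theorem asymExpDomain_subset_general
    {Γ X : Type*} [Group Γ] [MulAction Γ X] [MeasurableSpace X]
    (ν : Measure X)
    (hmeas : ∀ γ : Γ, Measurable fun x : X => γ • x)
    (Y : Set X) (hYm : MeasurableSet Y) (hY0 : 0 < ν Y) (hYfin : ν Y < ⊤)
    (hdom : AsymExpDomain Γ ν Y)
    (Y' : Set X) (hY'sub : Y' ⊆ Y) (hY'0 : 0 < ν Y') :
    AsymExpDomain Γ ν Y' := by
  classical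
  have : MeasurableConstSMul Γ X := ⟨hmeas⟩
  intro α hα _
  have hα' : 0 < min α (1 / 8) := lt_min hα (by norm_num)
  obtain ⟨α₀, hα₀, hα₀2, hα₀Y⟩ := ENNReal.exists_pos_le_half_ofReal_mul_le hYfin.ne
    (mul_ne_zero (ENNReal.ofReal_pos.2 hα').ne' hY'0.ne')
  obtain ⟨c, hc, S, hS, hexp⟩ := hdom α₀ hα₀ hα₀2
  obtain ⟨N, hN⟩ := ENNReal.exists_lt_pow_mul (r := 1 + ENNReal.ofReal c)
    (ENNReal.lt_add_right ENNReal.one_ne_top (ENNReal.ofReal_pos.2 hc).ne')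
    (mul_ne_zero (ENNReal.ofReal_pos.2 hα₀).ne' hY0.ne') hYfin.ne
  refine ⟨1 / 4, by norm_num, S ^ (N + N), hS.pow _, fun A hAm hAY' hαA hA2 => ?_⟩
  have hsmall := hexp.measure_diff_finSMul_pow_lt hS hYm hN hAm (hAY'.trans hY'sub)
    (hα₀Y.trans (le_trans (by gcongr; exact min_le_left _ _) hαA))
  refine one_add_quarter_mul_lt_measure_inter (measure_ne_top_of_subset hY'sub hYfin.ne)
    hY'0.ne' hA2 ?_
  calc ν (Y' \ finSMul (S ^ (N + N)) A) ≤ ν (Y \ finSMul (S ^ (N + N)) A) :=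
        measure_mono (sdiff_subset_sdiff_left hY'sub)
    _ ≤ ENNReal.ofReal (min α (1 / 8)) * ν Y' := hsmall.le.trans hα₀Y
    _ ≤ ENNReal.ofReal (1 / 8) * ν Y' := by gcongr; exact min_le_right _ _

/-- Lemma 3.8: any positive measure subset of a domain of asymptotic
expansion is again a domain of asymptotic expansion. -/
theorem asymExpDomain_subset
    {Γ X : Type*} [Group Γ] [Countable Γ] [MulAction Γ X] [MeasurableSpace X]
    (ν : Measure X)
    (hmeas : ∀ γ : Γ, Measurable fun x : X => γ • x)
    (Y : Set X) (hYm : MeasurableSet Y) (hY0 : 0 < ν Y) (hYfin : ν Y < ⊤)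
    (hdom : AsymExpDomain Γ ν Y)
    (Y' : Set X) (hY'm : MeasurableSet Y') (hY'sub : Y' ⊆ Y) (hY'0 : 0 < ν Y') :
    AsymExpDomain Γ ν Y' :=
  asymExpDomain_subset_general ν hmeas Y hYm hY0 hYfin hdom Y' hY'sub hY'0
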